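/- Suppose that for every δ ≥ 0 a positive solution κ_δ of the self-consistent equation exists, and that the target coefficients satisfy v_i = 0 for every i. Then R̃_δ = E_δ · σ² ≥ σ² for every δ ≥ 0, inf_{δ ≥ 0} R̃_δ = σ², and R̃_0 = E_0 · σ². Hence, if σ² > 0, the predicted cost of overfitting C̃ = R̃_0 / inf_{δ ≥ 0} R̃_δ equals E_0 exactly; i.e., the bound C̃ ≤ E_0 is attained. -/

import Mathlib

/-!
With `v = 0` the bias term vanishes, so `R̃_δ = E_δ σ²`, and `E_δ ≥ 1` because
`Σ L² < Σ L ≤ n` (each learnability lies in `[0, 1)` and one of them is positive).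
For the infimum, the self-consistent equation gives `δ / κ_δ ≤ n`, hence
`Σ L² ≤ Σ λ / κ_δ ≤ n Σ λ / δ → 0`, so `E_δ → 1` and `R̃_δ → σ²` as `δ → ∞`.
-/

open Filter Topology

noncomputable def learnability (lam : ℕ → ℝ) (k : ℝ) (i : ℕ) : ℝ := lam i / (lam i + k)

def IsSelfConsistent (lam : ℕ → ℝ) (n δ k : ℝ) : Prop :=
  0 < k ∧ ∑' i, learnability lam k i + δ / k = n

theorem isGLB_image_of_tendsto {α β : Type*} [TopologicalSpace β] [Preorder β]
    [ClosedIciTopology β] {f : α → β} {s : Set α} {l : Filter α} [l.NeBot] {a : β}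
    (hle : ∀ x ∈ s, a ≤ f x) (hs : s ∈ l) (hf : Tendsto f l (𝓝 a)) : IsGLB (f '' s) a :=
  ⟨Set.forall_mem_image.2 hle, fun _ hb =>
    ge_of_tendsto hf (mem_of_superset hs fun _ hx => hb ⟨_, hx, rfl⟩)⟩

section Learnability

variable {lam : ℕ → ℝ} {k : ℝ}

theorem learnability_nonneg (hlam : ∀ i, 0 ≤ lam i) (hk : 0 ≤ k) (i : ℕ) :
    0 ≤ learnability lam k i :=
  div_nonneg (hlam i) (add_nonneg (hlam i) hk)

theorem learnability_le_one (hlam : ∀ i, 0 ≤ lam i) (hk : 0 ≤ k) (i : ℕ) :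
    learnability lam k i ≤ 1 :=
  div_le_one_of_le₀ (le_add_of_nonneg_right hk) (add_nonneg (hlam i) hk)

theorem learnability_lt_one (hlam : ∀ i, 0 ≤ lam i) (hk : 0 < k) (i : ℕ) :
    learnability lam k i < 1 :=
  (div_lt_one (add_pos_of_nonneg_of_pos (hlam i) hk)).2 (lt_add_of_pos_right _ hk)

theorem learnability_le_div (hlam : ∀ i, 0 ≤ lam i) (hk : 0 < k) (i : ℕ) :
    learnability lam k i ≤ lam i / k :=
  div_le_div_of_nonneg_left (hlam i) hk (le_add_of_nonneg_left (hlam i))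

theorem learnability_sq_le (hlam : ∀ i, 0 ≤ lam i) (hk : 0 ≤ k) (i : ℕ) :
    learnability lam k i ^ 2 ≤ learnability lam k i :=
  sq_le (learnability_nonneg hlam hk i) (learnability_le_one hlam hk i)

theorem summable_learnability (hlam : ∀ i, 0 ≤ lam i) (hsum : Summable lam) (hk : 0 < k) :
    Summable (learnability lam k) :=
  .of_nonneg_of_le (learnability_nonneg hlam hk.le) (learnability_le_div hlam hk)
    (hsum.div_const k)

theorem summable_learnability_sq (hlam : ∀ i, 0 ≤ lam i) (hsum : Summable lam) (hk : 0 < k) :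
    Summable fun i => learnability lam k i ^ 2 :=
  .of_nonneg_of_le (fun _ => sq_nonneg _) (learnability_sq_le hlam hk.le)
    (summable_learnability hlam hsum hk)

theorem tsum_learnability_sq_lt_tsum_learnability (hlam : ∀ i, 0 ≤ lam i)
    (hsum : Summable lam) (hne : ∃ i, lam i ≠ 0) (hk : 0 < k) :
    ∑' i, learnability lam k i ^ 2 < ∑' i, learnability lam k i := by
  obtain ⟨i₀, hi₀⟩ := hne
  have hpos : 0 < learnability lam k i₀ :=
    div_pos ((hlam i₀).lt_of_ne' hi₀) (add_pos_of_nonneg_of_pos (hlam i₀) hk)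
  exact Summable.tsum_lt_tsum (learnability_sq_le hlam hk.le)
    (pow_lt_self_of_lt_one₀ hpos (learnability_lt_one hlam hk i₀) one_lt_two)
    (summable_learnability_sq hlam hsum hk) (summable_learnability hlam hsum hk)

theorem tsum_learnability_sq_le_tsum_div (hlam : ∀ i, 0 ≤ lam i) (hsum : Summable lam)
    (hk : 0 < k) : ∑' i, learnability lam k i ^ 2 ≤ (∑' i, lam i) / k :=
  calc ∑' i, learnability lam k i ^ 2 ≤ ∑' i, lam i / k :=
        Summable.tsum_le_tsum (fun i => (learnability_sq_le hlam hk.le i).trans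
          (learnability_le_div hlam hk i)) (summable_learnability_sq hlam hsum hk)
          (hsum.div_const k)
    _ = (∑' i, lam i) / k := tsum_div_const

end Learnability

namespace IsSelfConsistent

variable {lam : ℕ → ℝ} {n δ k : ℝ}

theorem tsum_learnability_sq_lt (h : IsSelfConsistent lam n δ k) (hδ : 0 ≤ δ)
    (hlam : ∀ i, 0 ≤ lam i) (hsum : Summable lam) (hne : ∃ i, lam i ≠ 0) :
    ∑' i, learnability lam k i ^ 2 < n := by
  have := tsum_learnability_sq_lt_tsum_learnability hlam hsum hne h.1
  have := div_nonneg hδ h.1.le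
  linarith [h.2]

theorem one_le_div_sub_tsum_learnability_sq (h : IsSelfConsistent lam n δ k) (hδ : 0 ≤ δ)
    (hlam : ∀ i, 0 ≤ lam i) (hsum : Summable lam) (hne : ∃ i, lam i ≠ 0) :
    1 ≤ n / (n - ∑' i, learnability lam k i ^ 2) := by
  have hlt := h.tsum_learnability_sq_lt hδ hlam hsum hne
  rw [one_le_div (sub_pos.2 hlt), sub_le_self_iff]
  exact tsum_nonneg fun _ => sq_nonneg _

theorem mul_tsum_learnability_sq_le (h : IsSelfConsistent lam n δ k) (hδ : 0 ≤ δ)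
    (hlam : ∀ i, 0 ≤ lam i) (hsum : Summable lam) :
    δ * ∑' i, learnability lam k i ^ 2 ≤ (∑' i, lam i) * n := by
  have hδk : δ / k ≤ n := by
    have : 0 ≤ ∑' i, learnability lam k i := tsum_nonneg (learnability_nonneg hlam h.1.le)
    linarith [h.2]
  calc δ * ∑' i, learnability lam k i ^ 2 ≤ δ * ((∑' i, lam i) / k) :=
        mul_le_mul_of_nonneg_left (tsum_learnability_sq_le_tsum_div hlam hsum h.1) hδ
    _ = (∑' i, lam i) * (δ / k) := by ring
    _ ≤ (∑' i, lam i) * n := mul_le_mul_of_nonneg_left hδk (tsum_nonneg hlam)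

end IsSelfConsistent

section Asymptotics

variable {lam : ℕ → ℝ} {n : ℝ} {κ : ℝ → ℝ}

theorem tendsto_tsum_learnability_sq_atTop
    (hκ : ∀ δ, 0 ≤ δ → IsSelfConsistent lam n δ (κ δ))
    (hlam : ∀ i, 0 ≤ lam i) (hsum : Summable lam) :
    Tendsto (fun δ => ∑' i, learnability lam (κ δ) i ^ 2) atTop (𝓝 0) := by
  refine tendsto_of_tendsto_of_tendsto_of_le_of_le' tendsto_const_nhds
    ((tendsto_const_nhds (x := (∑' i, lam i) * n)).div_atTop tendsto_id)
    (.of_forall fun _ => tsum_nonneg fun _ => sq_nonneg _)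
    ((eventually_gt_atTop 0).mono fun δ hδ => ?_)
  rw [id, le_div_iff₀ hδ, mul_comm]
  exact (hκ δ hδ.le).mul_tsum_learnability_sq_le hδ.le hlam hsum

theorem tendsto_div_sub_tsum_learnability_sq_atTop
    (hκ : ∀ δ, 0 ≤ δ → IsSelfConsistent lam n δ (κ δ))
    (hlam : ∀ i, 0 ≤ lam i) (hsum : Summable lam) (hne : ∃ i, lam i ≠ 0) :
    Tendsto (fun δ => n / (n - ∑' i, learnability lam (κ δ) i ^ 2)) atTop (𝓝 1) := by
  have hn : 0 < n := (tsum_nonneg fun _ => sq_nonneg _).trans_lt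
    ((hκ 0 le_rfl).tsum_learnability_sq_lt le_rfl hlam hsum hne)
  have hlim := (tendsto_const_nhds (x := n)).div
    (tendsto_const_nhds.sub (tendsto_tsum_learnability_sq_atTop hκ hlam hsum))
    (by simpa using hn.ne')
  rwa [sub_zero, div_self hn.ne'] at hlim

end Asymptotics

theorem cost_of_overfitting_attained_general
    (n : ℕ)
    (lam : ℕ → ℝ) (hlam_nonneg : ∀ i, 0 ≤ lam i)
    (hlam_summable : Summable lam) (hlam_ne : ∃ i, lam i ≠ 0)
    (v : ℕ → ℝ) (hv0 : ∀ i, v i = 0)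
    (σ2 : ℝ) (hσ2 : 0 ≤ σ2)
    (κ : ℝ → ℝ)
    (hκ_pos : ∀ δ, 0 ≤ δ → 0 < κ δ)
    (hκ_eq : ∀ δ, 0 ≤ δ → ∑' i, lam i / (lam i + κ δ) + δ / κ δ = (n : ℝ))
    (E : ℝ → ℝ)
    (hE : ∀ δ, E δ = (n : ℝ) / ((n : ℝ) - ∑' i, (lam i / (lam i + κ δ)) ^ 2))
    (Rt : ℝ → ℝ)
    (hRt : ∀ δ, Rt δ = E δ * (∑' i, (1 - lam i / (lam i + κ δ)) ^ 2 * v i ^ 2 + σ2)) :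
    (∀ δ, 0 ≤ δ → Rt δ = E δ * σ2 ∧ σ2 ≤ Rt δ) ∧
      sInf (Rt '' {δ : ℝ | 0 ≤ δ}) = σ2 ∧
      Rt 0 = E 0 * σ2 ∧
      (0 < σ2 → Rt 0 / sInf (Rt '' {δ : ℝ | 0 ≤ δ}) = E 0) := by
  have hκ : ∀ δ, 0 ≤ δ → IsSelfConsistent lam n δ (κ δ) := fun δ hδ => ⟨hκ_pos δ hδ, hκ_eq δ hδ⟩
  have hRtE : ∀ δ, Rt δ = E δ * σ2 := fun δ => by simp [hRt, hv0]
  have hσ2_le : ∀ δ, 0 ≤ δ → σ2 ≤ Rt δ := fun δ hδ => by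
    rw [hRtE, hE]
    exact le_mul_of_one_le_left hσ2
      ((hκ δ hδ).one_le_div_sub_tsum_learnability_sq hδ hlam_nonneg hlam_summable hlam_ne)
  have hlim : Tendsto Rt atTop (𝓝 σ2) := by
    have hE_lim := (tendsto_div_sub_tsum_learnability_sq_atTop hκ hlam_nonneg hlam_summable
      hlam_ne).mul_const σ2
    rw [one_mul] at hE_lim
    exact hE_lim.congr fun δ => by rw [hRtE, hE]; rfl
  have hinf : sInf (Rt '' {δ : ℝ | 0 ≤ δ}) = σ2 :=
    (isGLB_image_of_tendsto hσ2_le (Ici_mem_atTop 0) hlim).csInf_eq ⟨_, Set.mem_image_of_mem Rt (le_refl (0 : ℝ))⟩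
  refine ⟨fun δ hδ => ⟨hRtE δ, hσ2_le δ hδ⟩, hinf, hRtE 0, fun hσ2_pos => ?_⟩
  rw [hinf, hRtE 0, mul_div_cancel_right₀ _ hσ2_pos.ne']

/-- If the target coefficients satisfy `v_i = 0` for every `i`,
then `R̃_δ = E_δ · σ² ≥ σ²` for every `δ ≥ 0`, `inf_{δ ≥ 0} R̃_δ = σ²`, and
`R̃_0 = E_0 · σ²`; hence if `σ² > 0`, the predicted cost of overfitting
`C̃ = R̃_0 / inf_{δ ≥ 0} R̃_δ` equals `E_0` exactly. -/
theorem cost_of_overfitting_attained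
    (n : ℕ) (hn : 1 ≤ n)
    (lam : ℕ → ℝ) (hlam_nonneg : ∀ i, 0 ≤ lam i) (hlam_mono : Antitone lam)
    (hlam_summable : Summable lam) (hlam_ne : ∃ i, lam i ≠ 0)
    (v : ℕ → ℝ) (hv : Summable fun i => v i ^ 2) (hv0 : ∀ i, v i = 0)
    (σ2 : ℝ) (hσ2 : 0 ≤ σ2)
    (κ : ℝ → ℝ)
    (hκ_pos : ∀ δ, 0 ≤ δ → 0 < κ δ)
    (hκ_eq : ∀ δ, 0 ≤ δ → ∑' i, lam i / (lam i + κ δ) + δ / κ δ = (n : ℝ))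
    (E : ℝ → ℝ)
    (hE : ∀ δ, E δ = (n : ℝ) / ((n : ℝ) - ∑' i, (lam i / (lam i + κ δ)) ^ 2))
    (Rt : ℝ → ℝ)
    (hRt : ∀ δ, Rt δ = E δ * (∑' i, (1 - lam i / (lam i + κ δ)) ^ 2 * v i ^ 2 + σ2)) :
    (∀ δ, 0 ≤ δ → Rt δ = E δ * σ2 ∧ σ2 ≤ Rt δ) ∧
      sInf (Rt '' {δ : ℝ | 0 ≤ δ}) = σ2 ∧
      Rt 0 = E 0 * σ2 ∧
      (0 < σ2 → Rt 0 / sInf (Rt '' {δ : ℝ | 0 ≤ δ}) = E 0) :=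
  cost_of_overfitting_attained_general n lam hlam_nonneg hlam_summable hlam_ne v hv0 σ2 hσ2 κ hκ_pos
    hκ_eq E hE Rt hRt
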